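/- arXiv:2601.01076 — 2 statements merged into one kernel-verified Lean document; each statement's English description precedes it below -/
import Mathlib

section
/- Let R^(1), …, R^(K), R^(0) be exchangeable real-valued random variables, δ ∈ (0,1), and let C be the ⌈(K+1)(1−δ)⌉-th smallest value among R^(1), …, R^(K) (with C = +∞ if ⌈(K+1)(1−δ)⌉ > K). Then P(R^(0) ≤ C) ≥ 1 − δ. -/
open MeasureTheory Finset ENNReal

/-- The `p`-th smallest value among `r 0, …, r (K-1)` (p counted from 1):
the least `c` such that at least `p` of the values are `≤ c`. -/
noncomputable def orderStat {K : ℕ} (p : ℕ) (r : Fin K → ℝ) : ℝ :=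
  sInf {c : ℝ | p ≤ (Finset.univ.filter (fun i => r i ≤ c)).card}

lemma card_filter_lt' {n : ℕ} (k : Fin n) : (univ.filter fun m : Fin n => m < k).card = k := by
  have : (univ.filter fun m : Fin n => m < k) = Finset.Iio k := by ext m; simp
  rw [this, Fin.card_Iio]

lemma card_filter_comp_perm {n : ℕ} (σ : Equiv.Perm (Fin n)) (q : Fin n → Prop) [DecidablePred q] :
    (univ.filter fun i => q (σ i)).card = (univ.filter fun i => q i).card := by
  apply Finset.card_bij (fun i _ => σ i)
  · intro a ha; simpa using (Finset.mem_filter.mp ha).2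
  · intro a _ b _ h; exact σ.injective h
  · intro b hb; exact ⟨σ.symm b, by simpa using (Finset.mem_filter.mp hb).2, by simp⟩

lemma key_rank (n p : ℕ) (hp : p ≤ n) (x : Fin n → ℝ) :
    p ≤ (univ.filter fun j => (univ.filter fun i => x i < x j).card < p).card := by
  set σ := Tuple.sort x with hσ
  have hmono : Monotone (x ∘ σ) := Tuple.monotone_sort x
  have hsub : (univ.filter fun k : Fin n => (k : ℕ) < p).image σ ⊆
      univ.filter fun j => (univ.filter fun i => x i < x j).card < p := by
    intro j hj
    obtain ⟨k, hk, rfl⟩ := Finset.mem_image.mp hj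
    have hkp : (k : ℕ) < p := (Finset.mem_filter.mp hk).2
    refine Finset.mem_filter.mpr ⟨Finset.mem_univ _, ?_⟩
    have hsub2 : (univ.filter fun i => x i < x (σ k)) ⊆ (univ.filter fun m : Fin n => m < k).image σ := by
      intro i hi
      have hlt : x i < x (σ k) := (Finset.mem_filter.mp hi).2
      refine Finset.mem_image.mpr ⟨σ.symm i, Finset.mem_filter.mpr ⟨Finset.mem_univ _, ?_⟩, by simp⟩
      by_contra hge
      push_neg at hge
      have := hmono hge
      simp only [Function.comp_apply, Equiv.apply_symm_apply] at this
      exact absurd hlt (not_lt.mpr this)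
    calc (univ.filter fun i => x i < x (σ k)).card
        ≤ ((univ.filter fun m : Fin n => m < k).image σ).card := Finset.card_le_card hsub2
      _ ≤ (univ.filter fun m : Fin n => m < k).card := Finset.card_image_le
      _ = (k : ℕ) := card_filter_lt' k
      _ < p := hkp
  calc p = (univ.filter fun k : Fin n => (k : ℕ) < p).card := by
        have himg : (univ.filter fun k : Fin n => (k : ℕ) < p)
            = (univ : Finset (Fin p)).image (Fin.castLE hp) := by
          ext m
          simp only [Finset.mem_filter, Finset.mem_univ, true_and, Finset.mem_image]
          constructor
          · intro h
            refine ⟨⟨(m : ℕ), h⟩, ?_⟩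
            apply Fin.ext; simp
          · rintro ⟨a, rfl⟩; exact a.2
        rw [himg, Finset.card_image_of_injective _ (Fin.castLE_injective hp), Finset.card_univ,
          Fintype.card_fin]
    _ = ((univ.filter fun k : Fin n => (k : ℕ) < p).image σ).card := (Finset.card_image_of_injective _ σ.injective).symm
    _ ≤ _ := Finset.card_le_card hsub

/-- split conformal prediction coverage guarantee. If
`R 0, R 1, …, R K` are exchangeable and `C` is the `⌈(K+1)(1−δ)⌉`-th smallest of
`R 1, …, R K` (with the event holding trivially, i.e. `C = +∞`, when
`⌈(K+1)(1−δ)⌉ > K`), then `P(R 0 ≤ C) ≥ 1 − δ`. -/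
theorem stmt2 {Ω : Type*} [MeasurableSpace Ω] (μ : Measure Ω) [IsProbabilityMeasure μ]
    (K : ℕ) (R : Fin (K + 1) → Ω → ℝ) (hmeas : ∀ i, Measurable (R i))
    (hexch : ∀ σ : Equiv.Perm (Fin (K + 1)),
      μ.map (fun ω i => R (σ i) ω) = μ.map (fun ω i => R i ω))
    (δ : ℝ) (hδ : δ ∈ Set.Ioo (0 : ℝ) 1)
    (p : ℕ) (hp : p = ⌈((K : ℝ) + 1) * (1 - δ)⌉₊) :
    ENNReal.ofReal (1 - δ) ≤
      μ {ω | K < p ∨ R 0 ω ≤ orderStat p (fun i : Fin K => R i.succ ω)} := by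
  obtain ⟨hδ0, hδ1⟩ := hδ
  have h1δ : (0:ℝ) < 1 - δ := by linarith
  by_cases hpK : K < p
  · have : {ω | K < p ∨ R 0 ω ≤ orderStat p (fun i : Fin K => R i.succ ω)} = Set.univ := by
      ext ω; simp [hpK]
    rw [this, measure_univ]
    exact ENNReal.ofReal_le_one.mpr (by linarith)
  push_neg at hpK
  -- basic facts about p
  have hp1 : 1 ≤ p := by
    rw [hp]
    exact Nat.one_le_iff_ne_zero.mpr (Nat.ceil_pos.mpr (by positivity)).ne'
  have hpn : p ≤ K + 1 := by omega
  have hple : ((K:ℝ) + 1) * (1 - δ) ≤ (p : ℝ) := by rw [hp]; exact Nat.le_ceil _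
  -- the events
  set A : Fin (K+1) → Set Ω :=
    fun j => {ω | (univ.filter fun i => R i ω < R j ω).card < p} with hA
  have hAmeas : ∀ j, MeasurableSet (A j) := by
    intro j
    have hc : Measurable fun ω => ((univ.filter fun i => R i ω < R j ω).card : ℕ) := by
      simp only [Finset.card_filter]
      exact Finset.measurable_sum _ fun i _ =>
        Measurable.ite (measurableSet_lt (hmeas i) (hmeas j)) measurable_const measurable_const
    exact hc (measurableSet_Iio (a := p))
  set B : Set (Fin (K+1) → ℝ) := {x | (univ.filter fun i => x i < x 0).card < p} with hB
  have hBmeas : MeasurableSet B := by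
    have hc : Measurable fun x : Fin (K+1) → ℝ => ((univ.filter fun i => x i < x 0).card : ℕ) := by
      simp only [Finset.card_filter]
      exact Finset.measurable_sum _ fun i _ =>
        Measurable.ite (measurableSet_lt (measurable_pi_apply i) (measurable_pi_apply 0))
          measurable_const measurable_const
    exact hc (measurableSet_Iio (a := p))
  have hF : ∀ σ : Equiv.Perm (Fin (K+1)), Measurable (fun ω i => R (σ i) ω) :=
    fun σ => measurable_pi_lambda _ fun i => hmeas (σ i)
  -- all A j have the same measure
  have hAeq : ∀ j, μ (A j) = μ (A 0) := by
    intro j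
    have hpre : ∀ σ : Equiv.Perm (Fin (K+1)),
        (fun ω i => R (σ i) ω) ⁻¹' B = A (σ 0) := by
      intro σ
      ext ω
      simp only [Set.mem_preimage, hB, Set.mem_setOf_eq, hA]
      rw [card_filter_comp_perm σ (fun i => R i ω < R (σ 0) ω)]
    have h1 : μ (A j) = (μ.map (fun ω i => R ((Equiv.swap 0 j) i) ω)) B := by
      rw [Measure.map_apply (hF _) hBmeas, hpre, Equiv.swap_apply_left]
    have h2 : μ (A 0) = (μ.map (fun ω i => R i ω)) B := by
      rw [Measure.map_apply (measurable_pi_lambda _ hmeas) hBmeas]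
      rfl
    rw [h1, hexch, h2]
  -- lower bound on the sum
  have hsum : (p : ℝ≥0∞) ≤ ∑ j : Fin (K+1), μ (A j) := by
    have hrw : ∀ j : Fin (K+1), μ (A j) = ∫⁻ ω, (A j).indicator 1 ω ∂μ :=
      fun j => (lintegral_indicator_one (hAmeas j)).symm
    simp only [hrw]
    rw [← lintegral_finset_sum _ fun j _ => measurable_one.indicator (hAmeas j)]
    have hconst : (p : ℝ≥0∞) = ∫⁻ _, (p : ℝ≥0∞) ∂μ := by
      rw [lintegral_const, measure_univ, mul_one]
    rw [hconst]
    apply lintegral_mono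
    intro ω
    dsimp only
    have hkey := key_rank (K+1) p hpn (fun i => R i ω)
    have hcast : ∑ j : Fin (K+1), (A j).indicator (1 : Ω → ℝ≥0∞) ω
        = ((univ.filter fun j : Fin (K+1) => ω ∈ A j).card : ℝ≥0∞) := by
      rw [Finset.card_filter]
      push_cast
      congr 1
      ext j
      by_cases hj : ω ∈ A j <;> simp [Set.indicator_apply, hj]
    rw [hcast]
    exact_mod_cast hkey
  -- so p ≤ (K+1) * μ (A 0)
  have hmain : (p : ℝ≥0∞) ≤ (K + 1 : ℕ) * μ (A 0) := by
    calc (p : ℝ≥0∞) ≤ ∑ j : Fin (K+1), μ (A j) := hsum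
      _ = ∑ _j : Fin (K+1), μ (A 0) := by simp only [hAeq]
      _ = (K + 1 : ℕ) * μ (A 0) := by
          rw [Finset.sum_const, Finset.card_univ, Fintype.card_fin, nsmul_eq_mul]
  -- A 0 is contained in the target event
  have hsubset : A 0 ⊆ {ω | K < p ∨ R 0 ω ≤ orderStat p (fun i : Fin K => R i.succ ω)} := by
    intro ω hω
    right
    have hω' : (univ.filter fun i : Fin (K+1) => R i ω < R 0 ω).card < p := hω
    have hKcard : (univ.filter fun i : Fin K => R i.succ ω < R 0 ω).card < p := by
      have : (univ.filter fun i : Fin (K+1) => R i ω < R 0 ω).card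
          = (univ.filter fun i : Fin K => R i.succ ω < R 0 ω).card := by
        rw [Finset.card_filter, Finset.card_filter, Fin.sum_univ_succ]
        simp
      omega
    -- now show R 0 ω ≤ sInf {c | p ≤ card {i | R i.succ ω ≤ c}}
    apply le_csInf
    · obtain ⟨M, hM⟩ := Finset.exists_le (univ.image fun i : Fin K => R i.succ ω)
      refine ⟨M, ?_⟩
      have : (univ.filter fun i : Fin K => R i.succ ω ≤ M) = univ := by
        ext i
        simp only [Finset.mem_filter, Finset.mem_univ, true_and, iff_true]
        exact hM _ (Finset.mem_image_of_mem _ (Finset.mem_univ i))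
      simp only [Set.mem_setOf_eq, this, Finset.card_univ, Fintype.card_fin]
      omega
    · intro b hb
      by_contra hlt
      push_neg at hlt
      have hsub : (univ.filter fun i : Fin K => R i.succ ω ≤ b)
          ⊆ (univ.filter fun i : Fin K => R i.succ ω < R 0 ω) := by
        intro i hi
        simp only [Finset.mem_filter, Finset.mem_univ, true_and] at hi ⊢
        linarith
      have := Finset.card_le_card hsub
      have hbp : p ≤ (univ.filter fun i : Fin K => R i.succ ω ≤ b).card := hb
      omega
  -- conclude
  have hA0 : ENNReal.ofReal (1 - δ) ≤ μ (A 0) := by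
    have hKne : ((K + 1 : ℕ) : ℝ≥0∞) ≠ 0 := by exact_mod_cast Nat.succ_ne_zero K
    have hKnt : ((K + 1 : ℕ) : ℝ≥0∞) ≠ ⊤ := ENNReal.natCast_ne_top _
    rw [← ENNReal.mul_le_mul_iff_right hKne hKnt]
    calc ((K + 1 : ℕ) : ℝ≥0∞) * ENNReal.ofReal (1 - δ)
        = ENNReal.ofReal (((K:ℝ) + 1) * (1 - δ)) := by
          rw [ENNReal.ofReal_mul (by positivity)]
          congr 1
          rw [← ENNReal.ofReal_natCast (K+1)]
          congr 1
          push_cast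
          ring
      _ ≤ (p : ℝ≥0∞) := by
          rw [← ENNReal.ofReal_natCast p]
          exact ENNReal.ofReal_le_ofReal hple
      _ ≤ (K + 1 : ℕ) * μ (A 0) := hmain
  exact le_trans hA0 (measure_mono hsubset)
end

section
/- Let e^(0), e^(1), …, e^(K) ∈ ℝ^{(T+1)×n} be exchangeable random arrays, λ_{t,j} > 0 fixed weights, R^(i) = max_{t,j} λ_{t,j}|e^(i)_{t,j}| for each i, δ ∈ (0,1), and C the ⌈(K+1)(1−δ)⌉-th smallest of R^(1),…,R^(K) (or +∞ if this exceeds K). Then P( |e^(0)_{t,j}| ≤ C/λ_{t,j} for all t, j ) ≥ 1 − δ. -/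
/-!
Let `R i` be the score of `e i`; the scores inherit exchangeability from the arrays. Call `k`
good when fewer than `p` scores lie strictly below `R k`. For every outcome at least `p` of the
`K + 1` indices are good (a non-good index of least score has `≥ p` good indices below it), and
by exchangeability every index is good with the same probability, so `0` is good with probability
at least `p / (K + 1) ≥ 1 - δ`. When `0` is good, `R 0` is at most the `p`-th smallest of
`R 1, …, R K`, which bounds every weighted error `λ_{t,j} |e^0_{t,j}|`.
-/

open MeasureTheory

/-- The SNSA nonconformity score: maximum weighted absolute error over all times
and state dimensions. -/
noncomputable def snsaScore {T n : ℕ} (lam : Fin (T + 1) → Fin n → ℝ)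
    (e : Fin (T + 1) → Fin n → ℝ) : ℝ :=
  ⨆ t, ⨆ j, lam t j * |e t j|

open Finset
open scoped ENNReal

section Rank

variable {ι α : Type*} [Fintype ι] [LinearOrder α]

def strictRank (r : ι → α) (k : ι) : ℕ := #{i | r i < r k}

lemma strictRank_comp_perm (r : ι → α) (σ : Equiv.Perm ι) (k : ι) :
    strictRank (r ∘ σ) k = strictRank r (σ k) :=
  card_equiv σ fun i => by simp

lemma le_card_strictRank_lt (r : ι → α) {p : ℕ} (hp : p ≤ Fintype.card ι) :
    p ≤ #{k | strictRank r k < p} := by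
  by_cases hall : ∀ k, strictRank r k < p
  · simpa [hall] using hp
  obtain ⟨k, hk, hmin⟩ := exists_min_image ({k | p ≤ strictRank r k} : Finset ι) r
    (by simpa [filter_nonempty_iff] using hall)
  have hk : p ≤ strictRank r k := by simpa using hk
  have hbelow : ({i | r i < r k} : Finset ι) ⊆ ({k | strictRank r k < p} : Finset ι) :=
    fun i hi => by
      simp only [mem_filter, mem_univ, true_and] at hi ⊢
      by_contra! hi'
      exact (hmin i (by simpa using hi')).not_gt hi
  exact hk.trans (card_le_card hbelow)

lemma strictRank_zero_eq {K : ℕ} (r : Fin (K + 1) → α) :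
    strictRank r 0 = #{i : Fin K | r i.succ < r 0} := by
  simp [strictRank, Fin.card_filter_univ_succ']

end Rank

lemma measurable_strictRank {ι : Type*} [Fintype ι] (k : ι) :
    Measurable fun r : ι → ℝ => strictRank r k := by
  simp_rw [strictRank, card_filter]
  exact Finset.measurable_sum _ fun i _ =>
    Measurable.ite (measurableSet_lt (measurable_pi_apply i) (measurable_pi_apply k))
      measurable_const measurable_const

lemma le_orderStat_of_card_lt {K p : ℕ} (hpK : p ≤ K) (r : Fin K → ℝ) {x : ℝ}
    (hx : #{i | r i < x} < p) : x ≤ orderStat p r := by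
  obtain ⟨M, hM⟩ := (Set.finite_range r).bddAbove
  refine le_csInf ⟨M, ?_⟩ fun c hc => ?_
  · have hall : ({i | r i ≤ M} : Finset (Fin K)) = univ :=
      filter_true_of_mem fun i _ => hM ⟨i, rfl⟩
    simpa [hall] using hpK
  · by_contra! hcx
    have hsub : ({i | r i ≤ c} : Finset (Fin K)) ⊆ ({i | r i < x} : Finset (Fin K)) :=
      fun i => by simpa using fun hi : r i ≤ c => hi.trans_lt hcx
    exact (hc.trans (card_le_card hsub)).not_gt hx

lemma le_snsaScore {T n : ℕ} (lam : Fin (T + 1) → Fin n → ℝ) (e : Fin (T + 1) → Fin n → ℝ)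
    (t : Fin (T + 1)) (j : Fin n) : lam t j * |e t j| ≤ snsaScore lam e :=
  (le_ciSup (Set.finite_range fun j => lam t j * |e t j|).bddAbove j).trans
    (le_ciSup (Set.finite_range fun t => ⨆ j, lam t j * |e t j|).bddAbove t)

lemma measurable_snsaScore {T n : ℕ} (lam : Fin (T + 1) → Fin n → ℝ) :
    Measurable (snsaScore lam) :=
  Measurable.iSup fun t => Measurable.iSup fun j => measurable_const.mul
    ((measurable_pi_apply j).comp (measurable_pi_apply t)).abs

lemma ENNReal.ofReal_le_natCeil_mul_div {N : ℕ} (hN : N ≠ 0) (x : ℝ) :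
    ENNReal.ofReal x ≤ (⌈(N : ℝ) * x⌉₊ : ℝ≥0∞) / N := by
  have hN' : (0 : ℝ) < N := by positivity
  calc ENNReal.ofReal x ≤ ENNReal.ofReal (⌈(N : ℝ) * x⌉₊ / N) := by
        gcongr
        rw [le_div_iff₀ hN', mul_comm]
        exact Nat.le_ceil _
    _ = _ := by rw [ENNReal.ofReal_div_of_pos hN', ENNReal.ofReal_natCast, ENNReal.ofReal_natCast]

section Exchangeable

variable {Ω ι α β : Type*} [MeasurableSpace Ω] [MeasurableSpace α] [MeasurableSpace β]
  {μ : Measure Ω}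

def IsExchangeable (μ : Measure Ω) (X : ι → Ω → α) : Prop :=
  ∀ σ : Equiv.Perm ι, μ.map (fun ω i => X (σ i) ω) = μ.map (fun ω i => X i ω)

lemma IsExchangeable.comp {X : ι → Ω → α} (hX : IsExchangeable μ X)
    (hXm : ∀ i, Measurable (X i)) {g : α → β} (hg : Measurable g) :
    IsExchangeable μ fun i ω => g (X i ω) := by
  intro σ
  have hG : Measurable fun (x : ι → α) i => g (x i) :=
    measurable_pi_lambda _ fun i => hg.comp (measurable_pi_apply i)
  calc μ.map (fun ω i => g (X (σ i) ω))
      = (μ.map fun ω i => X (σ i) ω).map fun x i => g (x i) :=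
        (Measure.map_map hG (measurable_pi_lambda _ fun i => hXm (σ i))).symm
    _ = μ.map (fun ω i => g (X i ω)) := by
        rw [hX σ, Measure.map_map hG (measurable_pi_lambda _ hXm)]
        rfl

lemma IsExchangeable.measure_preimage_perm {X : ι → Ω → α} (hX : IsExchangeable μ X)
    (hXm : ∀ i, Measurable (X i)) (σ : Equiv.Perm ι) {S : Set (ι → α)} (hS : MeasurableSet S) :
    μ ((fun ω i => X (σ i) ω) ⁻¹' S) = μ ((fun ω i => X i ω) ⁻¹' S) := by
  rw [← Measure.map_apply (measurable_pi_lambda _ fun i => hXm (σ i)) hS,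
    ← Measure.map_apply (measurable_pi_lambda _ hXm) hS, hX σ]

theorem IsExchangeable.div_card_le_measure_strictRank_lt [Fintype ι] [IsProbabilityMeasure μ]
    {R : ι → Ω → ℝ} (hR : IsExchangeable μ R) (hRm : ∀ i, Measurable (R i)) (k₀ : ι) {p : ℕ}
    (hp : p ≤ Fintype.card ι) :
    (p : ℝ≥0∞) / Fintype.card ι ≤ μ {ω | strictRank (fun i => R i ω) k₀ < p} := by
  classical
  set S : Set (ι → ℝ) := {r | strictRank r k₀ < p}
  have hS : MeasurableSet S := measurable_strictRank k₀ measurableSet_Iio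
  set E : ι → Set Ω := fun k => {ω | strictRank (fun i => R i ω) k < p}
  -- `k` is good for the scores exactly when `k₀` is good for the scores permuted by `swap k₀ k`
  have hE : ∀ k, E k = (fun ω i => R (Equiv.swap k₀ k i) ω) ⁻¹' S := fun k => by
    ext ω
    have hrank := strictRank_comp_perm (fun i => R i ω) (Equiv.swap k₀ k) k₀
    rw [Equiv.swap_apply_left] at hrank
    simp only [S, E, Set.mem_ofPred_eq, Set.mem_preimage, ← hrank]
    rfl
  have hEm : ∀ k, MeasurableSet (E k) := fun k =>
    hE k ▸ measurable_pi_lambda _ (fun i => hRm _) hS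
  have hcount : ∀ ω, (p : ℝ≥0∞) ≤ ∑ k, (E k).indicator 1 ω := fun ω => by
    simpa [Set.indicator_apply, E] using le_card_strictRank_lt (fun i => R i ω) hp
  refine ENNReal.div_le_of_le_mul' ?_
  calc (p : ℝ≥0∞) = ∫⁻ _, (p : ℝ≥0∞) ∂μ := by simp
    _ ≤ ∫⁻ ω, ∑ k, (E k).indicator 1 ω ∂μ := lintegral_mono hcount
    _ = ∑ k, μ (E k) := by
        rw [lintegral_finsetSum' _ fun k _ => (measurable_one.indicator (hEm k)).aemeasurable]
        exact sum_congr rfl fun k _ => lintegral_indicator_one (hEm k)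
    _ = Fintype.card ι * μ (E k₀) := by
        rw [← card_univ, ← nsmul_eq_mul, ← sum_const]
        refine sum_congr rfl fun k _ => ?_
        rw [hE k, hR.measure_preimage_perm hRm _ hS]
        rfl

end Exchangeable

/-- conformal coverage with the weighted max-norm (SNSA) score. For
exchangeable error arrays `e 0, …, e K`, scores `R i = max_{t,j} λ_{t,j}|e^i_{t,j}|`,
and `C` the `⌈(K+1)(1−δ)⌉`-th smallest of `R 1, …, R K` (the event holding trivially,
i.e. `C = +∞`, when `⌈(K+1)(1−δ)⌉ > K`), we have
`P(|e^0_{t,j}| ≤ C/λ_{t,j} for all t, j) ≥ 1 − δ`. -/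
theorem stmt16 {Ω : Type*} [MeasurableSpace Ω] (μ : Measure Ω) [IsProbabilityMeasure μ]
    (K T n : ℕ) (e : Fin (K + 1) → Ω → Fin (T + 1) → Fin n → ℝ)
    (hmeas : ∀ i, Measurable (e i))
    (hexch : ∀ σ : Equiv.Perm (Fin (K + 1)),
      μ.map (fun ω i => e (σ i) ω) = μ.map (fun ω i => e i ω))
    (lam : Fin (T + 1) → Fin n → ℝ) (hlam : ∀ t j, 0 < lam t j)
    (δ : ℝ) (hδ : δ ∈ Set.Ioo (0 : ℝ) 1)
    (p : ℕ) (hp : p = ⌈((K : ℝ) + 1) * (1 - δ)⌉₊) :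
    ENNReal.ofReal (1 - δ) ≤
      μ {ω | K < p ∨ ∀ t j, |e 0 ω t j| ≤
        orderStat p (fun i : Fin K => snsaScore lam (e i.succ ω)) / lam t j} := by
  rcases lt_or_ge K p with hKp | hpK
  · simpa [hKp] using hδ.1.le
  set R : Fin (K + 1) → Ω → ℝ := fun i ω => snsaScore lam (e i ω)
  have hR : IsExchangeable μ R := IsExchangeable.comp hexch hmeas (measurable_snsaScore lam)
  have hRm : ∀ i, Measurable (R i) := fun i => (measurable_snsaScore lam).comp (hmeas i)
  have hgood : {ω | strictRank (fun i => R i ω) 0 < p} ⊆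
      {ω | K < p ∨ ∀ t j, |e 0 ω t j| ≤
        orderStat p (fun i : Fin K => snsaScore lam (e i.succ ω)) / lam t j} := by
    intro ω hω
    refine Or.inr fun t j => ?_
    rw [le_div_iff₀ (hlam t j), mul_comm]
    have hω : #{i : Fin K | R i.succ ω < R 0 ω} < p := strictRank_zero_eq (fun i => R i ω) ▸ hω
    exact (le_snsaScore lam _ t j).trans (le_orderStat_of_card_lt hpK _ hω)
  calc ENNReal.ofReal (1 - δ) ≤ (p : ℝ≥0∞) / (K + 1 : ℕ) := by
        rw [hp]
        exact_mod_cast ENNReal.ofReal_le_natCeil_mul_div K.succ_ne_zero (1 - δ)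
    _ ≤ μ {ω | strictRank (fun i => R i ω) 0 < p} := by
        simpa using hR.div_card_le_measure_strictRank_lt hRm 0 (by simpa using hpK.trans K.le_succ)
    _ ≤ _ := measure_mono hgood
end
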